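/- For every real number μ ≥ 0 and every probability vector p, limsup_{k→∞} s_k(p)^{1/k} ≤ μ if and only if p_i = 0 for every index i such that some block B_s with λ_s > μ is communicated by i. (This is the key claim of the paper's Remark on traces: h_X^τ ≤ log λ_n if and only if τ vanishes on all vertex sets V_j with j > n, where V_j consists of the vertices communicating with components of Perron–Frobenius eigenvalue λ_j > λ_n.) -/

import Mathlib

/-- `s_k(p) = ∑_{i,j} p_i (G^k)_{ij}`, where `G` has natural-number entries. -/
def sk {N : ℕ} (G : Matrix (Fin N) (Fin N) ℕ) (p : Fin N → ℝ) (k : ℕ) : ℝ :=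
  ∑ i, ∑ j, p i * ((G ^ k) i j : ℝ)

/-- The block `B_s = blk⁻¹(s)` is communicated by the index `i`: there exist `k ≥ 0` and
`j ∈ B_s` with `(G^k)_{ij} > 0`. -/
def CommByIdx {N m : ℕ} (G : Matrix (Fin N) (Fin N) ℕ) (blk : Fin N → Fin m)
    (s : Fin m) (i : Fin N) : Prop :=
  ∃ k : ℕ, ∃ j : Fin N, blk j = s ∧ 0 < (G ^ k) i j

/-- The block `B_r` is communicated by the block `B_s`: it is communicated by some index of
`B_s`. -/
def CommByBlk {N m : ℕ} (G : Matrix (Fin N) (Fin N) ℕ) (blk : Fin N → Fin m)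
    (r s : Fin m) : Prop :=
  ∃ i : Fin N, blk i = s ∧ CommByIdx G blk r i

/-- The block `B_s` is a sink: `G_{ij} = 0` for all `i ∈ B_s` and `j ∉ B_s`. -/
def IsSinkBlk {N m : ℕ} (G : Matrix (Fin N) (Fin N) ℕ) (blk : Fin N → Fin m)
    (s : Fin m) : Prop :=
  ∀ i j : Fin N, blk i = s → blk j ≠ s → G i j = 0

/-- The block `B_s` is `μ`-maximal: `λ_s = μ` and `λ_s ≥ λ_r` for every block `B_r`
communicated by `B_s`. -/
def IsMaximalBlk {N m : ℕ} (G : Matrix (Fin N) (Fin N) ℕ) (blk : Fin N → Fin m)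
    (lam : Fin m → ℝ) (μ : ℝ) (s : Fin m) : Prop :=
  lam s = μ ∧ ∀ r : Fin m, CommByBlk G blk r s → lam r ≤ lam s

/-
If `p` vanishes at every index from which a block with `λ_s > μ` is reachable, its support lies
in a forward-closed set of indices on which every diagonal block has eigenvalue `≤ μ`. Rescaling
`w` by `δ ^ s` on block `B_s`, for small `δ`, damps the blocks above the diagonal and gives a
positive vector `v` with `G v ≤ (μ + ε) v` on that set; hence `s_k(p) = O((μ + ε) ^ k)`.
Conversely, if `p_i > 0` and `i` reaches a block `B_s`, the eigenvector `w_s` extended by zero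
satisfies `G x ≥ λ_s x`, so `s_k(p) ≥ c λ_s ^ k` for all large `k`.
-/

open Filter Finset Matrix Topology

theorem Finite.exists_pos_forall_le_of_pos {ι : Type*} [Finite ι] {v : ι → ℝ}
    (hv : ∀ i, 0 < v i) : ∃ c, 0 < c ∧ ∀ i, c ≤ v i := by
  have : ∀ᶠ c in 𝓝[>] (0 : ℝ), ∀ i, c ≤ v i :=
    eventually_all.2 fun i => nhdsWithin_le_nhds (eventually_le_nhds (hv i))
  obtain ⟨c, hcv, hc⟩ := (this.and self_mem_nhdsWithin).exists
  exact ⟨c, hc, hcv⟩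

theorem Finite.exists_pos_forall_ge {ι : Type*} [Finite ι] (v : ι → ℝ) :
    ∃ C, 0 < C ∧ ∀ i, v i ≤ C := by
  obtain ⟨C, hC⟩ := (_root_.Set.finite_range v).bddAbove
  exact ⟨max C 1, by positivity, fun i => (hC ⟨i, rfl⟩).trans (le_max_left _ _)⟩

namespace Matrix

variable {ι : Type*} [Fintype ι] {A : Matrix ι ι ℝ}

theorem mulVec_mono_of_nonneg (hA : ∀ i j, 0 ≤ A i j) {x y : ι → ℝ} (h : x ≤ y) :
    A *ᵥ x ≤ A *ᵥ y := fun i =>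
  Finset.sum_le_sum fun j _ => mul_le_mul_of_nonneg_left (h j) (hA i j)

variable [DecidableEq ι]

theorem smul_pow_le_pow_mulVec (hA : ∀ i j, 0 ≤ A i j) {ρ : ℝ} (hρ : 0 ≤ ρ) {x : ι → ℝ}
    (h : ρ • x ≤ A *ᵥ x) (k : ℕ) : ρ ^ k • x ≤ A ^ k *ᵥ x := by
  induction k with
  | zero => simp
  | succ k ih =>
    calc ρ ^ (k + 1) • x = ρ ^ k • (ρ • x) := by rw [pow_succ, mul_smul]
      _ ≤ ρ ^ k • (A *ᵥ x) := smul_le_smul_of_nonneg_left h (pow_nonneg hρ k)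
      _ = A *ᵥ (ρ ^ k • x) := (mulVec_smul A _ x).symm
      _ ≤ A *ᵥ (A ^ k *ᵥ x) := mulVec_mono_of_nonneg hA ih
      _ = A ^ (k + 1) *ᵥ x := by rw [mulVec_mulVec, pow_succ']

theorem pow_mulVec_apply_le (hA : ∀ i j, 0 ≤ A i j) {Q : ι → Prop}
    (hQ : ∀ i j, Q i → 0 < A i j → Q j) {ρ : ℝ} (hρ : 0 ≤ ρ) {v : ι → ℝ}
    (h : ∀ i, Q i → (A *ᵥ v) i ≤ ρ * v i) (k : ℕ) :
    ∀ i, Q i → (A ^ k *ᵥ v) i ≤ ρ ^ k * v i := by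
  induction k with
  | zero => simp
  | succ k ih =>
    intro i hi
    calc (A ^ (k + 1) *ᵥ v) i = ∑ j, A i j * (A ^ k *ᵥ v) j := by
          rw [pow_succ', ← mulVec_mulVec]; rfl
      _ ≤ ∑ j, A i j * (ρ ^ k * v j) := by
          refine Finset.sum_le_sum fun j _ => ?_
          rcases (hA i j).eq_or_lt with hij | hij
          · simp [← hij]
          · exact mul_le_mul_of_nonneg_left (ih j (hQ i j hi hij)) hij.le
      _ = ρ ^ k * (A *ᵥ v) i := by
          simp only [mulVec, dotProduct, Finset.mul_sum]
          exact Finset.sum_congr rfl fun j _ => by ring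
      _ ≤ ρ ^ k * (ρ * v i) := mul_le_mul_of_nonneg_left (h i hi) (pow_nonneg hρ k)
      _ = ρ ^ (k + 1) * v i := by ring

theorem exists_pow_mulVec_one_apply_le (hA : ∀ i j, 0 ≤ A i j) {Q : ι → Prop}
    (hQ : ∀ i j, Q i → 0 < A i j → Q j) {ρ : ℝ} (hρ : 0 ≤ ρ) {v : ι → ℝ}
    (hv : ∀ i, 0 < v i) (h : ∀ i, Q i → (A *ᵥ v) i ≤ ρ * v i) :
    ∃ C, 0 < C ∧ ∀ k i, Q i → (A ^ k *ᵥ 1) i ≤ C * ρ ^ k := by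
  obtain ⟨c, hc, hcv⟩ := Finite.exists_pos_forall_le_of_pos hv
  obtain ⟨C, hC, hvC⟩ := Finite.exists_pos_forall_ge v
  refine ⟨C / c, div_pos hC hc, fun k i hi => ?_⟩
  have hbelow : c * (A ^ k *ᵥ 1) i ≤ (A ^ k *ᵥ v) i := by
    rw [← smul_eq_mul, ← Pi.smul_apply, ← mulVec_smul]
    exact mulVec_mono_of_nonneg (pow_apply_nonneg hA k) (fun j => by simpa using hcv j) i
  rw [div_mul_eq_mul_div, le_div_iff₀ hc, mul_comm]
  calc c * (A ^ k *ᵥ 1) i ≤ (A ^ k *ᵥ v) i := hbelow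
    _ ≤ ρ ^ k * v i := pow_mulVec_apply_le hA hQ hρ h k i hi
    _ ≤ C * ρ ^ k := by rw [mul_comm]; exact mul_le_mul_of_nonneg_right (hvC i) (pow_nonneg hρ k)

theorem exists_mul_pow_le_pow_mulVec_apply (hA : ∀ i j, 0 ≤ A i j) {ρ : ℝ} (hρ : 0 < ρ)
    {x : ι → ℝ} (h : ρ • x ≤ A *ᵥ x) {i : ι} {k₀ : ℕ} (hpos : 0 < (A ^ k₀ *ᵥ x) i) :
    ∃ c, 0 < c ∧ ∀ k, k₀ ≤ k → c * ρ ^ k ≤ (A ^ k *ᵥ x) i := by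
  refine ⟨(A ^ k₀ *ᵥ x) i / ρ ^ k₀, by positivity, fun k hk => ?_⟩
  obtain ⟨n, rfl⟩ := Nat.exists_eq_add_of_le hk
  have hgrowth : ρ ^ n • (A ^ k₀ *ᵥ x) ≤ A ^ (k₀ + n) *ᵥ x := by
    rw [← mulVec_smul, pow_add, ← mulVec_mulVec]
    exact mulVec_mono_of_nonneg (pow_apply_nonneg hA k₀) (smul_pow_le_pow_mulVec hA hρ.le h n)
  calc (A ^ k₀ *ᵥ x) i / ρ ^ k₀ * ρ ^ (k₀ + n) = ρ ^ n * (A ^ k₀ *ᵥ x) i := by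
        field_simp; ring
    _ ≤ (A ^ (k₀ + n) *ᵥ x) i := hgrowth i

end Matrix

section Blocks

variable {ι : Type*} [Fintype ι] {m : ℕ} {A : Matrix ι ι ℝ} {blk : ι → Fin m} {w : ι → ℝ}

theorem exists_pos_mulVec_le_add (hA : ∀ i j, 0 ≤ A i j)
    (hupper : ∀ i j, blk j < blk i → A i j = 0) (hw : ∀ i, 0 < w i) {ρ : ι → ℝ}
    (hρ : ∀ i, ∑ j ∈ univ.filter (fun j => blk j = blk i), A i j * w j ≤ ρ i * w i)
    {ε : ℝ} (hε : 0 < ε) :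
    ∃ v : ι → ℝ, (∀ i, 0 < v i) ∧ ∀ i, (A *ᵥ v) i ≤ (ρ i + ε) * v i := by
  have hsmall : ∀ᶠ δ in 𝓝[>] (0 : ℝ), δ ≤ 1 ∧ ∀ i, δ * (A *ᵥ w) i ≤ ε * w i := by
    refine nhdsWithin_le_nhds ((eventually_le_nhds one_pos).and (eventually_all.2 fun i => ?_))
    have hlim : Tendsto (fun δ : ℝ => δ * (A *ᵥ w) i) (𝓝 0) (𝓝 0) := by
      simpa using (tendsto_id (x := 𝓝 (0 : ℝ))).mul_const ((A *ᵥ w) i)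
    exact hlim.eventually (eventually_le_nhds (mul_pos hε (hw i)))
  obtain ⟨δ, ⟨hδ1, hδ⟩, hδ0 : 0 < δ⟩ := (hsmall.and self_mem_nhdsWithin).exists
  refine ⟨fun i => δ ^ (blk i : ℕ) * w i, fun i => by have := hw i; positivity, fun i => ?_⟩
  have hterm : ∀ j, A i j * (δ ^ (blk j : ℕ) * w j) ≤
      δ ^ (blk i : ℕ) * ((if blk j = blk i then A i j * w j else 0) + δ * (A i j * w j)) := by
    intro j
    have hAw : 0 ≤ A i j * w j := mul_nonneg (hA i j) (hw j).le
    rcases lt_trichotomy (blk j) (blk i) with hlt | heq | hgt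
    · simp only [hupper i j hlt, zero_mul, if_neg hlt.ne]
      positivity
    · simp only [heq, if_true]
      nlinarith [pow_nonneg hδ0.le (blk i : ℕ), mul_nonneg hδ0.le hAw]
    · have hpow : δ ^ (blk j : ℕ) ≤ δ ^ (blk i : ℕ) * δ := by
        rw [← pow_succ]; exact pow_le_pow_of_le_one hδ0.le hδ1 hgt
      simp only [if_neg hgt.ne', zero_add]
      nlinarith [mul_le_mul_of_nonneg_right hpow hAw]
  calc (A *ᵥ fun i => δ ^ (blk i : ℕ) * w i) i
      ≤ ∑ j, δ ^ (blk i : ℕ) * ((if blk j = blk i then A i j * w j else 0) + δ * (A i j * w j)) :=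
        Finset.sum_le_sum fun j _ => hterm j
    _ = δ ^ (blk i : ℕ) * (∑ j ∈ univ.filter (fun j => blk j = blk i), A i j * w j
          + δ * (A *ᵥ w) i) := by
        rw [← Finset.mul_sum, Finset.sum_add_distrib, ← Finset.mul_sum, Finset.sum_filter]; rfl
    _ ≤ δ ^ (blk i : ℕ) * (ρ i * w i + ε * w i) :=
        mul_le_mul_of_nonneg_left (add_le_add (hρ i) (hδ i)) (by positivity)
    _ = (ρ i + ε) * (δ ^ (blk i : ℕ) * w i) := by ring

theorem smul_le_mulVec_blockIndicator (hA : ∀ i j, 0 ≤ A i j) (hw : ∀ i, 0 ≤ w i) {s : Fin m}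
    {ρ : ℝ} (heig : ∀ i, blk i = s →
      ρ * w i ≤ ∑ j ∈ univ.filter (fun j => blk j = s), A i j * w j) :
    ρ • (fun j => if blk j = s then w j else 0) ≤ A *ᵥ fun j => if blk j = s then w j else 0 := by
  intro i
  have hsum : (A *ᵥ fun j => if blk j = s then w j else 0) i
      = ∑ j ∈ univ.filter (fun j => blk j = s), A i j * w j := by
    rw [Finset.sum_filter]
    exact Finset.sum_congr rfl fun j _ => by rw [mul_ite, mul_zero]
  by_cases hi : blk i = s
  · simpa [hi, hsum] using heig i hi
  · simp only [Pi.smul_apply, hi, if_false, smul_zero, hsum]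
    exact Finset.sum_nonneg fun j _ => mul_nonneg (hA i j) (hw j)

end Blocks

section GrowthRate

variable {u : ℕ → ℝ} {C ρ : ℝ}

theorem tendsto_mul_pow_rpow_inv (hC : 0 < C) (hρ : 0 ≤ ρ) :
    Tendsto (fun k : ℕ => (C * ρ ^ k) ^ (k : ℝ)⁻¹) atTop (𝓝 ρ) := by
  have hC' : Tendsto (fun k : ℕ => C ^ (k : ℝ)⁻¹) atTop (𝓝 1) := by
    simpa [Function.comp_def] using ((Real.continuousAt_const_rpow hC.ne').tendsto).comp
      tendsto_inv_atTop_nhds_zero_nat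
  refine (by simpa using hC'.mul_const ρ : Tendsto (fun k : ℕ => C ^ (k : ℝ)⁻¹ * ρ) atTop _)
    |>.congr' ?_
  filter_upwards [eventually_ge_atTop 1] with k hk
  rw [Real.mul_rpow hC.le (pow_nonneg hρ k), ← Real.rpow_natCast, ← Real.rpow_mul hρ,
    mul_inv_cancel₀ (by exact_mod_cast (Nat.one_le_iff_ne_zero.1 hk)), Real.rpow_one]

theorem rpow_inv_le_mul_pow_rpow_inv (hu0 : ∀ k, 0 ≤ u k) (hu : ∀ k, u k ≤ C * ρ ^ k) (k : ℕ) :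
    u k ^ (k : ℝ)⁻¹ ≤ (C * ρ ^ k) ^ (k : ℝ)⁻¹ :=
  Real.rpow_le_rpow (hu0 k) (hu k) (by positivity)

theorem isBoundedUnder_rpow_inv_of_le_mul_pow (hu0 : ∀ k, 0 ≤ u k) (hC : 0 < C) (hρ : 0 ≤ ρ)
    (hu : ∀ k, u k ≤ C * ρ ^ k) :
    IsBoundedUnder (· ≤ ·) atTop (fun k : ℕ => u k ^ (k : ℝ)⁻¹) :=
  (tendsto_mul_pow_rpow_inv hC hρ).isBoundedUnder_le.mono_le
    (Eventually.of_forall (rpow_inv_le_mul_pow_rpow_inv hu0 hu))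

theorem limsup_rpow_inv_le_of_le_mul_pow (hu0 : ∀ k, 0 ≤ u k) (hC : 0 < C) (hρ : 0 ≤ ρ)
    (hu : ∀ k, u k ≤ C * ρ ^ k) :
    limsup (fun k : ℕ => u k ^ (k : ℝ)⁻¹) atTop ≤ ρ := by
  rw [← (tendsto_mul_pow_rpow_inv hC hρ).limsup_eq]
  exact limsup_le_limsup (Eventually.of_forall (rpow_inv_le_mul_pow_rpow_inv hu0 hu))
    (isCoboundedUnder_le_of_le atTop fun k => Real.rpow_nonneg (hu0 k) _)
    (tendsto_mul_pow_rpow_inv hC hρ).isBoundedUnder_le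

theorem le_limsup_rpow_inv_of_mul_pow_le (hC : 0 < C) (hρ : 0 ≤ ρ)
    (hu : ∀ᶠ k in atTop, C * ρ ^ k ≤ u k)
    (hbdd : IsBoundedUnder (· ≤ ·) atTop (fun k : ℕ => u k ^ (k : ℝ)⁻¹)) :
    ρ ≤ limsup (fun k : ℕ => u k ^ (k : ℝ)⁻¹) atTop := by
  rw [← (tendsto_mul_pow_rpow_inv hC hρ).limsup_eq]
  exact limsup_le_limsup
    (hu.mono fun k hk => Real.rpow_le_rpow (by positivity) hk (by positivity))
    (tendsto_mul_pow_rpow_inv hC hρ).isCoboundedUnder_le hbdd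

end GrowthRate

section Communication

variable {N m : ℕ} {G : Matrix (Fin N) (Fin N) ℕ} {blk : Fin N → Fin m}

theorem commByIdx_self (i : Fin N) : CommByIdx G blk (blk i) i :=
  ⟨0, i, rfl, by simp⟩

theorem CommByIdx.of_pos {s : Fin m} {i j : Fin N} (hj : CommByIdx G blk s j)
    (hij : 0 < G i j) : CommByIdx G blk s i := by
  obtain ⟨k, j', hj', hpos⟩ := hj
  refine ⟨k + 1, j', hj', ?_⟩
  rw [pow_succ', Matrix.mul_apply]
  exact (Nat.mul_pos hij hpos).trans_le
    (Finset.single_le_sum (f := fun a => G i a * (G ^ k) a j') (fun _ _ => Nat.zero_le _)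
      (Finset.mem_univ j))

end Communication

theorem Matrix.map_natCast_pow {ι : Type*} [Fintype ι] [DecidableEq ι] (G : Matrix ι ι ℕ)
    (k : ℕ) : (G.map (Nat.cast : ℕ → ℝ)) ^ k = (G ^ k).map Nat.cast := by
  simpa using (Matrix.map_pow G (Nat.castRingHom ℝ) k).symm

section RowSums

variable {N : ℕ} {G : Matrix (Fin N) (Fin N) ℕ} {p : Fin N → ℝ}

theorem sk_eq_sum_mul_pow_mulVec_one (k : ℕ) :
    sk G p k = ∑ i, p i * ((G.map (Nat.cast : ℕ → ℝ)) ^ k *ᵥ 1) i := by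
  simp [sk, map_natCast_pow, mulVec, dotProduct, Finset.mul_sum]

theorem sk_nonneg (hp : ∀ i, 0 ≤ p i) (k : ℕ) : 0 ≤ sk G p k :=
  Finset.sum_nonneg fun i _ => Finset.sum_nonneg fun _ _ => mul_nonneg (hp i) (Nat.cast_nonneg _)

theorem mul_pow_mulVec_one_le_sk (hp : ∀ i, 0 ≤ p i) (i : Fin N) (k : ℕ) :
    p i * ((G.map (Nat.cast : ℕ → ℝ)) ^ k *ᵥ 1) i ≤ sk G p k := by
  rw [sk_eq_sum_mul_pow_mulVec_one]
  refine Finset.single_le_sum (f := fun i => p i * ((G.map (Nat.cast : ℕ → ℝ)) ^ k *ᵥ 1) i)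
    (fun i _ => mul_nonneg (hp i) ?_) (Finset.mem_univ i)
  have := mulVec_mono_of_nonneg (A := G.map (Nat.cast : ℕ → ℝ) ^ k)
    (pow_apply_nonneg (fun i j => Nat.cast_nonneg (G i j)) k) (zero_le_one : (0 : Fin N → ℝ) ≤ 1) i
  rwa [mulVec_zero] at this

end RowSums

section SpectralBounds

variable {N m : ℕ} {G : Matrix (Fin N) (Fin N) ℕ} {blk : Fin N → Fin m} {lam : Fin m → ℝ}
  {w : Fin N → ℝ} {p : Fin N → ℝ}

theorem exists_sk_le_mul_pow (hupper : ∀ i j : Fin N, blk j < blk i → G i j = 0)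
    (hw : ∀ i, 0 < w i)
    (heig : ∀ i : Fin N,
      ∑ j ∈ Finset.univ.filter (fun j => blk j = blk i), (G i j : ℝ) * w j
        = lam (blk i) * w i)
    {μ : ℝ} (hμ : 0 ≤ μ) (hp : ∀ i, 0 ≤ p i) (hp1 : ∑ i, p i = 1)
    (hsupp : ∀ i, p i ≠ 0 → ∀ s, CommByIdx G blk s i → lam s ≤ μ) {ε : ℝ} (hε : 0 < ε) :
    ∃ C, 0 < C ∧ ∀ k, sk G p k ≤ C * (μ + ε) ^ k := by
  set A : Matrix (Fin N) (Fin N) ℝ := G.map Nat.cast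
  have hA : ∀ i j, 0 ≤ A i j := fun i j => Nat.cast_nonneg (G i j)
  obtain ⟨v, hv, hAv⟩ := exists_pos_mulVec_le_add hA
    (fun i j h => by simp [A, hupper i j h]) hw (fun i => (heig i).le) hε
  set Q : Fin N → Prop := fun i => ∀ s, CommByIdx G blk s i → lam s ≤ μ
  have hQ : ∀ i j, Q i → 0 < A i j → Q j := fun i j hi hij s hs =>
    hi s (hs.of_pos (Nat.cast_pos.1 hij))
  have hAvQ : ∀ i, Q i → (A *ᵥ v) i ≤ (μ + ε) * v i := fun i hi =>
    (hAv i).trans (mul_le_mul_of_nonneg_right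
      (add_le_add_left (hi _ (commByIdx_self i)) ε) (hv i).le)
  obtain ⟨C, hC, hrow⟩ := exists_pow_mulVec_one_apply_le hA hQ (by positivity) hv hAvQ
  refine ⟨C, hC, fun k => ?_⟩
  calc sk G p k = ∑ i, p i * (A ^ k *ᵥ 1) i := sk_eq_sum_mul_pow_mulVec_one k
    _ ≤ ∑ i, p i * (C * (μ + ε) ^ k) := Finset.sum_le_sum fun i _ => by
        rcases eq_or_ne (p i) 0 with h | h
        · simp [h]
        · exact mul_le_mul_of_nonneg_left (hrow k i (hsupp i h)) (hp i)
    _ = C * (μ + ε) ^ k := by rw [← Finset.sum_mul, hp1, one_mul]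

theorem exists_mul_pow_le_sk (hw : ∀ i, 0 < w i)
    (heig : ∀ i : Fin N,
      ∑ j ∈ Finset.univ.filter (fun j => blk j = blk i), (G i j : ℝ) * w j
        = lam (blk i) * w i)
    (hp : ∀ i, 0 ≤ p i) {i : Fin N} (hpi : 0 < p i) {s : Fin m} (hs : 0 < lam s)
    (hcomm : CommByIdx G blk s i) :
    ∃ c, 0 < c ∧ ∀ᶠ k in atTop, c * lam s ^ k ≤ sk G p k := by
  set A : Matrix (Fin N) (Fin N) ℝ := G.map Nat.cast
  have hA : ∀ i j, 0 ≤ A i j := fun i j => Nat.cast_nonneg (G i j)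
  set x : Fin N → ℝ := fun j => if blk j = s then w j else 0
  have hx : lam s • x ≤ A *ᵥ x :=
    smul_le_mulVec_blockIndicator hA (fun j => (hw j).le) fun j hj => (hj ▸ heig j).ge
  have hx0 : 0 ≤ x := fun a => by
    simp only [x]
    split_ifs
    exacts [(hw a).le, le_rfl]
  obtain ⟨k₀, j, hj, hpath⟩ := hcomm
  have hpos : 0 < (A ^ k₀ *ᵥ x) i := by
    have hterm : 0 < (A ^ k₀) i j * x j := by
      simpa [A, x, hj, map_natCast_pow] using mul_pos (Nat.cast_pos.2 hpath) (hw j)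
    exact hterm.trans_le (Finset.single_le_sum
      (fun a _ => mul_nonneg (pow_apply_nonneg hA k₀ i a) (hx0 a)) (Finset.mem_univ j))
  obtain ⟨c, hc, hgrowth⟩ := exists_mul_pow_le_pow_mulVec_apply hA hs hx hpos
  obtain ⟨B, hB, hxB⟩ := Finite.exists_pos_forall_ge x
  refine ⟨p i * c / B, by positivity, eventually_atTop.2 ⟨k₀, fun k hk => ?_⟩⟩
  have hxle : A ^ k *ᵥ x ≤ B • (A ^ k *ᵥ 1) := by
    rw [← mulVec_smul]
    exact mulVec_mono_of_nonneg (pow_apply_nonneg hA k) fun j => by simpa using hxB j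
  calc p i * c / B * lam s ^ k = p i * (c * lam s ^ k) / B := by ring
    _ ≤ p i * (B * (A ^ k *ᵥ 1) i) / B := div_le_div_of_nonneg_right
        (mul_le_mul_of_nonneg_left ((hgrowth k hk).trans (hxle i)) (hp i)) hB.le
    _ = p i * (A ^ k *ᵥ 1) i := by field_simp
    _ ≤ sk G p k := mul_pow_mulVec_one_le_sk hp i k

end SpectralBounds

theorem stmt_14_general
    -- Context: `G` is an `N × N` matrix with nonnegative integer entries, block upper
    -- triangular with respect to the partition of `Fin N` into `m` nonempty consecutive
    -- blocks given by the fibers of the monotone surjection `blk`; each diagonal block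
    -- `G_s` has eigenvalue `λ_s ≥ 0` with strictly positive eigenvector `w|_{B_s}`.
    (N m : ℕ)
    (G : Matrix (Fin N) (Fin N) ℕ)
    (blk : Fin N → Fin m)
    (hupper : ∀ i j : Fin N, blk j < blk i → G i j = 0)
    (lam : Fin m → ℝ)
    (w : Fin N → ℝ) (hw : ∀ i, 0 < w i)
    (heig : ∀ i : Fin N,
      ∑ j ∈ Finset.univ.filter (fun j => blk j = blk i), (G i j : ℝ) * w j
        = lam (blk i) * w i)
    :
    ∀ μ : ℝ, 0 ≤ μ →
      ∀ p : Fin N → ℝ, (∀ i, 0 ≤ p i) → (∑ i, p i = 1) →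
        (Filter.limsup (fun k : ℕ => sk G p k ^ ((k : ℝ)⁻¹)) Filter.atTop ≤ μ ↔
          ∀ i : Fin N, (∃ s : Fin m, μ < lam s ∧ CommByIdx G blk s i) → p i = 0) := by
  intro μ hμ p hp hp1
  constructor
  · rintro hlim i ⟨s, hμs, hcomm⟩
    by_contra hpi
    obtain ⟨c, hc, hlower⟩ := exists_mul_pow_le_sk hw heig hp ((hp i).lt_of_ne' hpi)
      (hμ.trans_lt hμs) hcomm
    -- `limsup` of a real sequence that is unbounded above is `0`, so boundedness is needed.
    have hbdd : IsBoundedUnder (· ≤ ·) atTop (fun k : ℕ => sk G p k ^ (k : ℝ)⁻¹) := by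
      obtain ⟨R, hR⟩ := (Set.finite_range lam).bddAbove
      obtain ⟨C, hC, hbound⟩ := exists_sk_le_mul_pow hupper hw heig (le_max_left 0 R) hp hp1
        (fun _ _ s _ => (hR ⟨s, rfl⟩).trans (le_max_right 0 R)) one_pos
      exact isBoundedUnder_rpow_inv_of_le_mul_pow (sk_nonneg hp) hC (by positivity) hbound
    linarith [le_limsup_rpow_inv_of_mul_pow_le hc (hμ.trans hμs.le) hlower hbdd]
  · intro hvanish
    refine le_of_forall_pos_le_add fun ε hε => ?_
    obtain ⟨C, hC, hbound⟩ := exists_sk_le_mul_pow hupper hw heig hμ hp hp1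
      (fun i hpi s hs => not_lt.1 fun hμs => hpi (hvanish i ⟨s, hμs, hs⟩)) hε
    exact limsup_rpow_inv_le_of_le_mul_pow (sk_nonneg hp) hC (by positivity) hbound

/-- for `μ ≥ 0` and a probability vector `p`,
`limsup_k s_k(p)^{1/k} ≤ μ` iff `p_i = 0` for every index `i` communicating with some
block `B_s` with `λ_s > μ`. -/
theorem stmt_14
    -- Context: `G` is an `N × N` matrix with nonnegative integer entries, block upper
    -- triangular with respect to the partition of `Fin N` into `m` nonempty consecutive
    -- blocks given by the fibers of the monotone surjection `blk`; each diagonal block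
    -- `G_s` has eigenvalue `λ_s ≥ 0` with strictly positive eigenvector `w|_{B_s}`.
    (N m : ℕ) (hN : 1 ≤ N) (hm : 1 ≤ m)
    (G : Matrix (Fin N) (Fin N) ℕ)
    (blk : Fin N → Fin m) (hmono : Monotone blk) (hsurj : Function.Surjective blk)
    (hupper : ∀ i j : Fin N, blk j < blk i → G i j = 0)
    (lam : Fin m → ℝ) (hlam : ∀ s, 0 ≤ lam s)
    (w : Fin N → ℝ) (hw : ∀ i, 0 < w i)
    (heig : ∀ i : Fin N,
      ∑ j ∈ Finset.univ.filter (fun j => blk j = blk i), (G i j : ℝ) * w j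
        = lam (blk i) * w i)
    :
    ∀ μ : ℝ, 0 ≤ μ →
      ∀ p : Fin N → ℝ, (∀ i, 0 ≤ p i) → (∑ i, p i = 1) →
        (Filter.limsup (fun k : ℕ => sk G p k ^ ((k : ℝ)⁻¹)) Filter.atTop ≤ μ ↔
          ∀ i : Fin N, (∃ s : Fin m, μ < lam s ∧ CommByIdx G blk s i) → p i = 0) :=
  stmt_14_general N m G blk hupper lam w hw heig
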